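/- If a process P is well typed (i.e., there exist a linear typing environment Δ and a shared typing environment Γ such that the judgment Δ; Γ ⊢ P holds with empty authorization set Σ = ∅), then P is not an authorization error. -/
import Mathlib


/-! Process calculus with role authorizations (Pantović et al., "Dynamic role authorization
in multiparty conversations"). Labels, roles and channels are infinite base sets. -/

abbrev Chan := ℕ
abbrev Role := ℕ
abbrev Label := ℕ

/-- Qualified roles: `auth r` (authorized, written `r`) or `unauth r` (written `¬r`). -/
inductive Qual where
  | auth : Role → Qual
  | unauth : Role → Qual
deriving DecidableEq

/-- Underlying role of a qualified role. -/
def Qual.role : Qual → Role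
  | auth r => r
  | unauth r => r

/-- A qualified role is unauthorized when it is of the form `¬r`. -/
def Qual.IsUnauth : Qual → Prop
  | auth _ => False
  | unauth _ => True

/-- Communication prefixes α: output `a_ρ!l(b)`, input `a_ρ?l(b)`,
authorization sending `a_ρ!l(σ)`, authorization receiving `a_ρ?l(r)`. -/
inductive Pre where
  | output : Chan → Qual → Label → Chan → Pre
  | input : Chan → Qual → Label → Chan → Pre
  | sendAuth : Chan → Qual → Label → Qual → Pre
  | recvAuth : Chan → Qual → Label → Role → Pre

/-- A prefix is unauthorized if its subject is decorated with an unauthorized role,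
or if it outputs an unauthorized role as object. -/
def Pre.Unauthorized : Pre → Prop
  | .output _ ρ _ _ => ρ.IsUnauth
  | .input _ ρ _ _ => ρ.IsUnauth
  | .sendAuth _ ρ _ σ => ρ.IsUnauth ∨ σ.IsUnauth
  | .recvAuth _ ρ _ _ => ρ.IsUnauth

/-- Processes P ::= 0 | P|Q | (νa)P | α.P -/
inductive Proc where
  | nil : Proc
  | par : Proc → Proc → Proc
  | res : Chan → Proc → Proc
  | act : Pre → Proc → Proc

/-- Free channels of a process (input prefixes bind their object, restriction binds its name). -/
def Proc.fc : Proc → Set Chan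
  | .nil => ∅
  | .par P Q => P.fc ∪ Q.fc
  | .res a P => P.fc \ {a}
  | .act (.output a _ _ b) P => {a, b} ∪ P.fc
  | .act (.input a _ _ b) P => {a} ∪ (P.fc \ {b})
  | .act (.sendAuth a _ _ _) P => {a} ∪ P.fc
  | .act (.recvAuth a _ _ _) P => {a} ∪ P.fc

/-- Name substitution on names: `subCh b c x = x{b/c}`. -/
def subCh (b c x : Chan) : Chan := if x = c then b else x

/-- Name substitution `P.subst b c = P{b/c}` (replacing free occurrences of `c` by `b`). -/
def Proc.subst : Proc → Chan → Chan → Proc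
  | .nil, _, _ => .nil
  | .par P Q, b, c => .par (P.subst b c) (Q.subst b c)
  | .res a P, b, c => if a = c then .res a P else .res a (P.subst b c)
  | .act (.output a ρ l d) P, b, c =>
      .act (.output (subCh b c a) ρ l (subCh b c d)) (P.subst b c)
  | .act (.input a ρ l d) P, b, c =>
      .act (.input (subCh b c a) ρ l d) (if d = c then P else P.subst b c)
  | .act (.sendAuth a ρ l σ) P, b, c =>
      .act (.sendAuth (subCh b c a) ρ l σ) (P.subst b c)
  | .act (.recvAuth a ρ l r) P, b, c =>
      .act (.recvAuth (subCh b c a) ρ l r) (P.subst b c)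

/-- Authorization of a qualified role on a given channel: on channel `a`,
replace `¬q` by `q`. -/
def authQ (a : Chan) (q : Role) (x : Chan) (ρ : Qual) : Qual :=
  if x = a ∧ ρ = Qual.unauth q then Qual.auth q else ρ

/-- The substitution `{a : q/¬q}`: replaces the unauthorized qualification `¬q`
by the authorized one `q` in prefix subjects on channel `a` and in role objects
sent on channel `a`. -/
def Proc.authSubst : Proc → Chan → Role → Proc
  | .nil, _, _ => .nil
  | .par P Q, a, q => .par (P.authSubst a q) (Q.authSubst a q)
  | .res b P, a, q => if b = a then .res b P else .res b (P.authSubst a q)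
  | .act (.output x ρ l d) P, a, q =>
      .act (.output x (authQ a q x ρ) l d) (P.authSubst a q)
  | .act (.input x ρ l d) P, a, q =>
      .act (.input x (authQ a q x ρ) l d) (P.authSubst a q)
  | .act (.sendAuth x ρ l σ) P, a, q =>
      .act (.sendAuth x (authQ a q x ρ) l (authQ a q x σ)) (P.authSubst a q)
  | .act (.recvAuth x ρ l r) P, a, q =>
      .act (.recvAuth x (authQ a q x ρ) l r) (P.authSubst a q)

/-- Structural congruence `≡`, defined in standard lines. -/
inductive SC : Proc → Proc → Prop
  | refl (P) : SC P P
  | symm : SC P Q → SC Q P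
  | trans : SC P Q → SC Q R → SC P R
  | parComm (P Q) : SC (.par P Q) (.par Q P)
  | parAssoc (P Q R) : SC (.par (.par P Q) R) (.par P (.par Q R))
  | parNil (P) : SC (.par P .nil) P
  | resNil (a) : SC (.res a .nil) .nil
  | resSwap (a b P) : SC (.res a (.res b P)) (.res b (.res a P))
  | scope (a P Q) : a ∉ Proc.fc Q → SC (.par (.res a P) Q) (.res a (.par P Q))
  | parCong : SC P P' → SC Q Q' → SC (.par P Q) (.par P' Q')
  | resCong (a) : SC P Q → SC (.res a P) (.res a Q)

/-- Reduction `P → Q`: rules [R-Comm] and [R-Auth] (requiring the acting roles,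
and in [R-Auth] also the communicated role, to be authorized), closed under
parallel composition, restriction and structural congruence. -/
inductive Red : Proc → Proc → Prop
  | comm (a s l b P r c Q) :
      Red (.par (.act (.output a (.auth s) l b) P) (.act (.input a (.auth r) l c) Q))
          (.par P (Q.subst b c))
  | auth (a s l q P r Q) :
      Red (.par (.act (.sendAuth a (.auth s) l (.auth q)) P)
                (.act (.recvAuth a (.auth r) l q) Q))
          (.par P (Q.authSubst a q))
  | par : Red P P' → Red (.par P Q) (.par P' Q)
  | res (a) : Red P Q → Red (.res a P) (.res a Q)
  | struct : SC P P' → Red P' Q' → SC Q' Q → Red P Q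

/-- `(ν a₁)…(ν aₙ) P`. -/
def resList : List Chan → Proc → Proc
  | [], P => P
  | a :: as, P => .res a (resList as P)

/-- `P` is an authorization error if `P ≡ (ν ã)(α.Q | R)` for some unauthorized prefix `α`. -/
def AuthError (P : Proc) : Prop :=
  ∃ (as : List Chan) (α : Pre) (Q R : Proc),
    SC P (resList as (.par (.act α Q) R)) ∧ α.Unauthorized
/-! Conversation types with role authorizations. -/

/-- Polarities p ::= !r | ?r | τ r→r. -/
inductive Polarity where
  | out : Role → Polarity
  | inp : Role → Polarity
  | tau : Role → Role → Polarity

mutual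
/-- Behavioral types B ::= end | B|B | ◇B | p l(M).B. -/
inductive BType where
  | tend : BType
  | par : BType → BType → BType
  | dia : BType → BType
  | comm : Polarity → Label → MType → BType → BType
/-- Message types M ::= B | T | r, where shared channel types are T ::= l(B). -/
inductive MType where
  | behav : BType → MType
  | shared : Label → BType → MType
  | role : Role → MType
end

/-- Subtyping `B <: B'`: allows behaviors prescribed to take place immediately to be
used in contexts that expect them to take place sometime (◇) later. -/
inductive SubT : BType → BType → Prop
  | refl (B) : SubT B B
  | trans : SubT B₁ B₂ → SubT B₂ B₃ → SubT B₁ B₃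
  | dia (B) : SubT B (.dia B)
  | parCong : SubT B₁ B₁' → SubT B₂ B₂' → SubT (.par B₁ B₂) (.par B₁' B₂')
  | diaCong : SubT B B' → SubT (.dia B) (.dia B')
  | commCong (p l M) : SubT B B' → SubT (.comm p l M B) (.comm p l M B')

/-- Splitting `B = B₁ ∘ B₂`: distributes slices of a protocol among participants;
in particular a message exchange `τ s→r` splits into the output `!s` and input `?r` slices. -/
inductive Split : BType → BType → BType → Prop
  | tend : Split .tend .tend .tend
  | endR (B) : Split B B .tend
  | symm : Split B B₁ B₂ → Split B B₂ B₁
  | par (B₁ B₂) : Split (.par B₁ B₂) B₁ B₂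
  | parCong : Split B B₁ B₂ → Split B' B₁' B₂' →
      Split (.par B B') (.par B₁ B₁') (.par B₂ B₂')
  | sync (s r l M) : Split B B₁ B₂ →
      Split (.comm (.tau s r) l M B) (.comm (.out s) l M B₁) (.comm (.inp r) l M B₂)
  | prefixL (p l M) : Split B B₁ B₂ →
      Split (.comm p l M B) (.comm p l M B₁) (.dia B₂)
  | diaCong : Split B B₁ B₂ → Split (.dia B) (.dia B₁) (.dia B₂)

/-- `matched B`: no unmatched (input or output) communication prefixes,
i.e. all communications are message exchanges `τ`. -/
def BType.Matched : BType → Prop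
  | .tend => True
  | .par B₁ B₂ => B₁.Matched ∧ B₂.Matched
  | .dia B => B.Matched
  | .comm p _ _ B => (∃ s r, p = Polarity.tau s r) ∧ B.Matched

/-- Linear typing environments Δ, mapping every channel to a behavioral type
(channels not in use are mapped to `end`). -/
abbrev DEnv := Chan → BType

/-- Shared typing environments Γ, partially mapping channels to shared channel types l(B). -/
abbrev GEnv := Chan → Option (Label × BType)

/-- The singleton linear environment `a : B`. -/
def DEnv.single (a : Chan) (B : BType) : DEnv := fun x => if x = a then B else .tend

/-- Splitting of linear environments (pointwise lifting of type splitting). -/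
def ESplit (Δ Δ₁ Δ₂ : DEnv) : Prop := ∀ x, Split (Δ x) (Δ₁ x) (Δ₂ x)

/-- The channels mentioned in an authorization set Σ ⊆ Channels × Roles. -/
def chansOf (S : Set (Chan × Role)) : Set Chan := {a | ∃ r, (a, r) ∈ S}

/-- `funauth a ρ` is `{(a,q)}` when `ρ = ¬q` and `∅` when `ρ` is authorized. -/
def funauth (a : Chan) : Qual → Set (Chan × Role)
  | .auth _ => ∅
  | .unauth q => {(a, q)}

/-- Typing judgment `Δ; Γ ⊢_Σ P` (Figure 3 of the paper). -/
inductive Typing : DEnv → GEnv → Set (Chan × Role) → Proc → Prop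
  | tEnd {Δ : DEnv} {Γ : GEnv} :
      (∀ x, Δ x = BType.tend) →
      Typing Δ Γ ∅ .nil
  | tSNew {Δ : DEnv} {Γ : GEnv} {S : Set (Chan × Role)} {a : Chan} {l : Label} {B : BType} {P : Proc} :
      Typing Δ (Function.update Γ a (some (l, B))) S P →
      Typing Δ Γ S (.res a P)
  | tNew {Δ : DEnv} {Γ : GEnv} {S : Set (Chan × Role)} {a : Chan} {B : BType} {P : Proc} :
      Typing (Function.update Δ a B) Γ S P →
      BType.Matched B →
      a ∉ chansOf S →
      Δ a = BType.tend →
      Typing Δ Γ S (.res a P)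
  | tPar {Δ Δ₁ Δ₂ : DEnv} {Γ : GEnv} {S X : Set (Chan × Role)} {P Q : Proc} :
      ESplit Δ Δ₁ Δ₂ →
      Typing Δ₁ Γ S P →
      Typing Δ₂ Γ X Q →
      Typing Δ Γ (S ∪ X) (.par P Q)
  | tRoleIn {Δp Δ Δc : DEnv} {Γ : GEnv} {S : Set (Chan × Role)} {a : Chan} {s : Role} {ρ : Qual} {l : Label} {B B' : BType} {P : Proc} :
      ESplit Δp Δ (DEnv.single a B) →
      Typing Δp Γ (S ∪ {(a, s)}) P →
      SubT (.comm (.inp ρ.role) l (.role s) B) B' →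
      ESplit Δc Δ (DEnv.single a B') →
      Typing Δc Γ (S ∪ funauth a ρ) (.act (.recvAuth a ρ l s) P)
  | tRoleOut {Δp Δ Δc : DEnv} {Γ : GEnv} {S : Set (Chan × Role)} {a : Chan} {ρ σ : Qual} {l : Label} {B B' : BType} {P : Proc} :
      ESplit Δp Δ (DEnv.single a B) →
      Typing Δp Γ S P →
      SubT (.comm (.out ρ.role) l (.role σ.role) B) B' →
      ESplit Δc Δ (DEnv.single a B') →
      Typing Δc Γ (S ∪ funauth a ρ ∪ funauth a σ) (.act (.sendAuth a ρ l σ) P)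
  | tIn {Δp Δ Δc : DEnv} {Γ : GEnv} {S : Set (Chan × Role)} {a b : Chan} {ρ : Qual} {l : Label} {B B' B'' : BType} {P : Proc} :
      ESplit Δp Δ (DEnv.single a B) →
      Typing (Function.update Δp b B') Γ S P →
      SubT (.comm (.inp ρ.role) l (.behav B') B) B'' →
      b ∉ chansOf S →
      ESplit Δc Δ (DEnv.single a B'') →
      Typing Δc Γ (S ∪ funauth a ρ) (.act (.input a ρ l b) P)
  | tOut {Δp Δ Δm Δc : DEnv} {Γ : GEnv} {S : Set (Chan × Role)} {a b : Chan} {ρ : Qual} {l : Label} {B B' B'' : BType} {P : Proc} :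
      ESplit Δp Δ (DEnv.single a B) →
      Typing Δp Γ S P →
      SubT (.comm (.out ρ.role) l (.behav B') B) B'' →
      ESplit Δm Δ (DEnv.single a B'') →
      ESplit Δc Δm (DEnv.single b B') →
      Typing Δc Γ (S ∪ funauth a ρ) (.act (.output a ρ l b) P)
  | tLsIn {Δp Δ Δc : DEnv} {Γ : GEnv} {S : Set (Chan × Role)} {a b : Chan} {ρ : Qual} {l lT : Label} {BT B B' : BType} {P : Proc} :
      ESplit Δp Δ (DEnv.single a B') →
      Typing Δp (Function.update Γ b (some (lT, BT))) S P →
      SubT (.comm (.inp ρ.role) l (.shared lT BT) B') B →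
      b ∉ chansOf S →
      ESplit Δc Δ (DEnv.single a B) →
      Typing Δc Γ (S ∪ funauth a ρ) (.act (.input a ρ l b) P)
  | tLsOut {Δp Δ Δc : DEnv} {Γ : GEnv} {S : Set (Chan × Role)} {a b : Chan} {ρ : Qual} {l lT : Label} {BT B B' : BType} {P : Proc} :
      ESplit Δp Δ (DEnv.single a B') →
      Typing Δp Γ S P →
      Γ b = some (lT, BT) →
      SubT (.comm (.out ρ.role) l (.shared lT BT) B') B →
      ESplit Δc Δ (DEnv.single a B) →
      Typing Δc Γ (S ∪ funauth a ρ) (.act (.output a ρ l b) P)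
  | tSIn {Δ : DEnv} {Γ : GEnv} {S : Set (Chan × Role)} {a b : Chan} {r : Role} {l : Label} {B : BType} {P : Proc} :
      Γ a = some (l, B) →
      Typing (Function.update Δ b B) Γ S P →
      b ∉ chansOf S →
      Typing Δ Γ S (.act (.input a (.auth r) l b) P)
  | tSOut {Δ Δc : DEnv} {Γ : GEnv} {S : Set (Chan × Role)} {a b : Chan} {r : Role} {l : Label} {B : BType} {P : Proc} :
      Γ a = some (l, B) →
      Typing Δ Γ S P →
      ESplit Δc Δ (DEnv.single b B) →
      Typing Δc Γ S (.act (.output a (.auth r) l b) P)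

/-- A process is well typed if `Δ; Γ ⊢_∅ P` for some `Δ` and `Γ`. -/
def WellTyped (P : Proc) : Prop := ∃ (Δ : DEnv) (Γ : GEnv), Typing Δ Γ ∅ P

/-- Reduction on behavioral types: a message exchange reduces to its continuation,
closed under parallel composition of types. -/
inductive TRed : BType → BType → Prop
  | sync (s r l M B) : TRed (.comm (.tau s r) l M B) B
  | parL (B) : TRed B₁ B₂ → TRed (.par B B₁) (.par B B₂)
  | parR (B) : TRed B₁ B₂ → TRed (.par B₁ B) (.par B₂ B)

/-- Reduction on linear environments: pointwise lifting of type reduction,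
embedding reflexivity. -/
def ERed (Δ Δ' : DEnv) : Prop := ∀ x, Δ x = Δ' x ∨ TRed (Δ x) (Δ' x)

/-- An unauthorized prefix occurring in active position (under only parallel
compositions and restrictions). -/
inductive ActErr : Proc → Prop
  | act {α : Pre} {P : Proc} : α.Unauthorized → ActErr (.act α P)
  | parL {P Q : Proc} : ActErr P → ActErr (.par P Q)
  | parR {P Q : Proc} : ActErr Q → ActErr (.par P Q)
  | res {a : Chan} {P : Proc} : ActErr P → ActErr (.res a P)

lemma actErr_par_iff {P Q : Proc} : ActErr (.par P Q) ↔ ActErr P ∨ ActErr Q := by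
  constructor
  · intro h
    cases h with
    | parL h => exact Or.inl h
    | parR h => exact Or.inr h
  · exact fun h => h.elim ActErr.parL ActErr.parR

lemma actErr_res_iff {a : Chan} {P : Proc} : ActErr (.res a P) ↔ ActErr P := by
  constructor
  · intro h
    cases h with
    | res h => exact h
  · exact ActErr.res

lemma actErr_nil_iff : ActErr .nil ↔ False := by
  constructor
  · intro h
    cases h
  · exact False.elim

lemma sc_actErr {P Q : Proc} (h : SC P Q) : ActErr P ↔ ActErr Q := by
  induction h with
  | refl => exact Iff.rfl
  | symm _ ih => exact ih.symm
  | trans _ _ ih1 ih2 => exact ih1.trans ih2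
  | parComm P Q => simp only [actErr_par_iff]; tauto
  | parAssoc P Q R => simp only [actErr_par_iff]; tauto
  | parNil P => simp only [actErr_par_iff, actErr_nil_iff]; tauto
  | resNil a => simp only [actErr_res_iff, actErr_nil_iff]
  | resSwap a b P => simp only [actErr_res_iff]
  | scope a P Q _ => simp only [actErr_par_iff, actErr_res_iff]
  | parCong _ _ ih1 ih2 => simp only [actErr_par_iff, ih1, ih2]
  | resCong a _ ih => simp only [actErr_res_iff, ih]

lemma actErr_resList (as : List Chan) {P : Proc} (h : ActErr P) :
    ActErr (resList as P) := by
  induction as with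
  | nil => exact h
  | cons a as ih => exact ActErr.res ih

lemma funauth_nonempty {ρ : Qual} {a : Chan} (h : ρ.IsUnauth) :
    (funauth a ρ).Nonempty := by
  cases ρ with
  | auth r => exact h.elim
  | unauth q => exact ⟨(a, q), rfl⟩

lemma typing_actErr {Δ : DEnv} {Γ : GEnv} {S : Set (Chan × Role)} {P : Proc}
    (h : Typing Δ Γ S P) (he : ActErr P) : S.Nonempty := by
  induction h with
  | tEnd _ => cases he
  | tSNew _ ih => cases he with | res h => exact ih h
  | tNew _ _ _ _ ih => cases he with | res h => exact ih h
  | tPar _ _ _ ih1 ih2 =>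
      cases he with
      | parL h => exact (ih1 h).inl
      | parR h => exact (ih2 h).inr
  | tRoleIn _ _ _ _ _ =>
      cases he with | act hu =>
      exact Set.Nonempty.mono Set.subset_union_right (funauth_nonempty hu)
  | tRoleOut _ _ _ _ _ =>
      cases he with | act hu =>
      rcases hu with hu | hu
      · exact Set.Nonempty.mono (Set.subset_union_right.trans Set.subset_union_left)
          (funauth_nonempty hu)
      · exact Set.Nonempty.mono Set.subset_union_right (funauth_nonempty hu)
  | tIn _ _ _ _ _ _ =>
      cases he with | act hu =>
      exact Set.Nonempty.mono Set.subset_union_right (funauth_nonempty hu)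
  | tOut _ _ _ _ _ _ =>
      cases he with | act hu =>
      exact Set.Nonempty.mono Set.subset_union_right (funauth_nonempty hu)
  | tLsIn _ _ _ _ _ _ =>
      cases he with | act hu =>
      exact Set.Nonempty.mono Set.subset_union_right (funauth_nonempty hu)
  | tLsOut _ _ _ _ _ _ =>
      cases he with | act hu =>
      exact Set.Nonempty.mono Set.subset_union_right (funauth_nonempty hu)
  | tSIn _ _ _ _ => cases he with | act hu => exact hu.elim
  | tSOut _ _ _ _ => cases he with | act hu => exact hu.elim

/-- **Error freedom**: if a process `P` is well typed (i.e. `Δ; Γ ⊢_∅ P`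
for some linear environment `Δ` and shared environment `Γ`),
then `P` is not an authorization error. -/
theorem error_free (P : Proc)
    (h : ∃ (Δ : DEnv) (Γ : GEnv), Typing Δ Γ ∅ P) :
    ¬ AuthError P := by
  rintro ⟨as, α, Q, R, hsc, hu⟩
  obtain ⟨Δ, Γ, ht⟩ := h
  have hact : ActErr P :=
    (sc_actErr hsc).mpr (actErr_resList as (ActErr.parL (ActErr.act hu)))
  obtain ⟨x, hx⟩ := typing_actErr ht hact
  exact hx
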